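/- arXiv:1502.06489 — 3 statements merged into one kernel-verified Lean document; each statement's English description precedes it below -/
import Mathlib

section
/- Let Q^I be the quiver with vertex set ℕ × {0,…,n} and arrows: for each r ∈ ℕ and 0 ≤ i ≤ g−1, an arrow (r, i+1) → (r, i) and an arrow (r+1, i) → (r, i+1); for each r ∈ ℕ and g ≤ i ≤ n, an arrow (r, i) → (r, i+1 mod (n+1)) and an arrow (r+1, i+1 mod (n+1)) → (r, i). Then the assignment F(τ^{r}γ_i) = (r, i) is a well-defined bijection from the set of preinjective arcs of P_{g,h} onto ℕ × {0,…,n}, and for any two preinjective arcs α, α′ the elementary moves from α to α′ are in bijection with the arrows from F(α) to F(α′) in Q^I; that is, F is an isomorphism from the quiver of preinjective arcs with elementary moves onto Q^I. -/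
/-- Shift the first entry of every point of `A` by `d` (well defined on arcs, since it
commutes with the deck transformations). -/
def shiftFst (d : ℤ) (A : Set (ℤ × ℤ)) : Set (ℤ × ℤ) := (fun p => (p.1 + d, p.2)) '' A

/-- Shift the second entry of every point of `A` by `d` (well defined on arcs). -/
def shiftSnd (d : ℤ) (A : Set (ℤ × ℤ)) : Set (ℤ × ℤ) := (fun p => (p.1, p.2 + d)) '' A

/-- The bridging arc `π[j_∂', x_∂]` of the annulus `P_{g,h}`, from the inner boundary `∂'`
to the outer boundary `∂`: the orbit of `(j, x) ∈ ℤ × ℤ` under `σ·(j,x) = (j+h, x+g)`. -/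
def orbPI (g h j x : ℤ) : Set (ℤ × ℤ) := {q : ℤ × ℤ | ∃ k : ℤ, q = (j + k * h, x + k * g)}

/-- Elementary moves between bridging arcs from `∂'` to `∂`:
`π[j_∂', x_∂] → π[(j+1)_∂', x_∂]` and `π[j_∂', x_∂] → π[j_∂', (x-1)_∂]`. -/
def elemPI (A B : Set (ℤ × ℤ)) : Prop := B = shiftFst 1 A ∨ B = shiftSnd (-1) A

/-- The injective arcs: `γ_i = π[(-2)_∂', (i-g+2)_∂]` for `0 ≤ i ≤ g` and
`γ_i = π[(i-g-2)_∂', 2_∂]` for `g < i ≤ n`. -/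
def gammaArc (g h i : ℤ) : Set (ℤ × ℤ) :=
  if i ≤ g then orbPI g h (-2) (i - g + 2) else orbPI g h (i - g - 2) 2

/-- A bridging arc from `∂'` to `∂` is preinjective if `γ_0` can be reached from it by a
finite (possibly empty) sequence of elementary moves. -/
def IsPreinj (g h : ℤ) (A : Set (ℤ × ℤ)) : Prop :=
  Relation.ReflTransGen elemPI A (gammaArc g h 0)

/-- The preinjective arc `τ^r γ_i`: `π[(-2-r)_∂', (i-g+2+r)_∂]` for `0 ≤ i ≤ g` and
`π[(i-g-2-r)_∂', (2+r)_∂]` for `g < i ≤ n`. -/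
def tauGammaArc (g h r i : ℤ) : Set (ℤ × ℤ) :=
  if i ≤ g then orbPI g h (-2 - r) (i - g + 2 + r) else orbPI g h (i - g - 2 - r) (2 + r)

open Classical in
/-- The number of elementary moves from the bridging arc `A` to the bridging arc `B`
(each arc from `∂'` to `∂` has exactly two elementary moves out of it). -/
noncomputable def piMoveCount (A B : Set (ℤ × ℤ)) : ℕ :=
  (if B = shiftFst 1 A then 1 else 0) + (if B = shiftSnd (-1) A then 1 else 0)

open Classical in
/-- The number of arrows from `v` to `w` in the quiver `Q^I` with vertex set
`ℕ × {0,…,n}` and arrows `(r, i+1) → (r, i)` and `(r+1, i) → (r, i+1)` for `0 ≤ i ≤ g-1`,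
`(r, i) → (r, (i+1) % (n+1))` and `(r+1, (i+1) % (n+1)) → (r, i)` for `g ≤ i ≤ n`. -/
noncomputable def qiCount (g n : ℤ) (v w : ℤ × ℤ) : ℕ :=
  (if v.1 = w.1 ∧ 0 ≤ v.1 ∧ v.2 = w.2 + 1 ∧ 0 ≤ w.2 ∧ w.2 ≤ g - 1 then 1 else 0) +
  (if v.1 = w.1 + 1 ∧ 0 ≤ w.1 ∧ w.2 = v.2 + 1 ∧ 0 ≤ v.2 ∧ v.2 ≤ g - 1 then 1 else 0) +
  (if v.1 = w.1 ∧ 0 ≤ v.1 ∧ g ≤ v.2 ∧ v.2 ≤ n ∧ w.2 = (v.2 + 1) % (n + 1) then 1 else 0) +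
  (if v.1 = w.1 + 1 ∧ 0 ≤ w.1 ∧ g ≤ w.2 ∧ w.2 ≤ n ∧ v.2 = (w.2 + 1) % (n + 1) then 1 else 0)

section AUX

lemma shiftFst_orb (g h j x d : ℤ) : shiftFst d (orbPI g h j x) = orbPI g h (j + d) x := by
  ext p
  constructor
  · rintro ⟨q, ⟨k, rfl⟩, rfl⟩
    exact ⟨k, by simp [Prod.ext_iff]; ring⟩
  · rintro ⟨k, rfl⟩
    exact ⟨(j + k * h, x + k * g), ⟨k, rfl⟩, by simp [Prod.ext_iff]; ring⟩

lemma shiftSnd_orb (g h j x d : ℤ) : shiftSnd d (orbPI g h j x) = orbPI g h j (x + d) := by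
  ext p
  constructor
  · rintro ⟨q, ⟨k, rfl⟩, rfl⟩
    exact ⟨k, by simp [Prod.ext_iff]; ring⟩
  · rintro ⟨k, rfl⟩
    exact ⟨(j + k * h, x + k * g), ⟨k, rfl⟩, by simp [Prod.ext_iff]; ring⟩

lemma orbPI_shift (g h j x k : ℤ) : orbPI g h (j + k * h) (x + k * g) = orbPI g h j x := by
  ext p
  constructor
  · rintro ⟨m, rfl⟩
    exact ⟨k + m, by simp [Prod.ext_iff]; constructor <;> ring⟩
  · rintro ⟨m, rfl⟩
    exact ⟨m - k, by simp [Prod.ext_iff]; constructor <;> ring⟩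

lemma orbPI_eq_iff' {g h j x j' x' : ℤ} (hg : 0 < g) (hh : 0 < h) :
    orbPI g h j x = orbPI g h j' x' ↔
      g * j' - h * x' = g * j - h * x ∧ (g + h) ∣ (j' + x') - (j + x) := by
  have hG : g + h ≠ 0 := by positivity
  constructor
  · intro he
    have hm : (j, x) ∈ orbPI g h j' x' := by
      rw [← he]; exact ⟨0, by simp⟩
    obtain ⟨k, hk⟩ := hm
    rw [Prod.ext_iff] at hk
    obtain ⟨h1, h2⟩ := hk
    simp only at h1 h2
    refine ⟨by linear_combination (-g) * h1 + h * h2, ⟨-k, by linear_combination -h1 - h2⟩⟩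
  · rintro ⟨hf, ⟨k, hk⟩⟩
    have hj : j' = j + k * h := by
      have h1 : (g + h) * (j' - j) = (g + h) * (k * h) := by linear_combination hf + h * hk
      have := mul_left_cancel₀ hG h1
      linarith
    have hx : x' = x + k * g := by
      have h1 : (g + h) * (x' - x) = (g + h) * (k * g) := by linear_combination -hf + g * hk
      have := mul_left_cancel₀ hG h1
      linarith
    rw [hj, hx, orbPI_shift]

lemma shiftFst_comp (d e : ℤ) (A : Set (ℤ × ℤ)) :
    shiftFst d (shiftFst e A) = shiftFst (d + e) A := by
  simp only [shiftFst, Set.image_image]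
  congr 1
  funext p
  simp [add_assoc, add_comm d e]

lemma shiftSnd_comp (d e : ℤ) (A : Set (ℤ × ℤ)) :
    shiftSnd d (shiftSnd e A) = shiftSnd (d + e) A := by
  simp only [shiftSnd, Set.image_image]
  congr 1
  funext p
  simp [add_assoc, add_comm d e]

lemma shiftFst_zero (A : Set (ℤ × ℤ)) : shiftFst 0 A = A := by simp [shiftFst]
lemma shiftSnd_zero (A : Set (ℤ × ℤ)) : shiftSnd 0 A = A := by simp [shiftSnd]

lemma reach_fst (g h : ℤ) (a : ℕ) (j x : ℤ) :
    Relation.ReflTransGen elemPI (orbPI g h (j - a) x) (orbPI g h j x) := by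
  induction a with
  | zero => simpa using Relation.ReflTransGen.refl
  | succ a ih =>
    refine Relation.ReflTransGen.head (Or.inl ?_) ih
    rw [shiftFst_orb]
    congr 1
    push_cast; ring

lemma reach_snd (g h : ℤ) (b : ℕ) (j x : ℤ) :
    Relation.ReflTransGen elemPI (orbPI g h j (x + b)) (orbPI g h j x) := by
  induction b with
  | zero => simpa using Relation.ReflTransGen.refl
  | succ b ih =>
    refine Relation.ReflTransGen.head (Or.inr ?_) ih
    rw [shiftSnd_orb]
    congr 1
    push_cast; ring

lemma preinj_iff (g h : ℤ) (hg0 : (0:ℤ) ≤ g) (A : Set (ℤ × ℤ)) :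
    IsPreinj g h A ↔ ∃ a b : ℕ, A = orbPI g h (-2 - a) (2 - g + b) := by
  have hgamma : gammaArc g h 0 = orbPI g h (-2) (2 - g) := by
    rw [gammaArc, if_pos hg0]
    congr 1
    ring
  constructor
  · intro hp
    unfold IsPreinj at hp
    induction hp using Relation.ReflTransGen.head_induction_on with
    | refl => exact ⟨0, 0, by rw [hgamma]; norm_num⟩
    | head hstep _ ih =>
      obtain ⟨a, b, rfl⟩ := ih
      rcases hstep with hs | hs
      · refine ⟨a + 1, b, ?_⟩
        have : shiftFst (-1) (shiftFst 1 _) = shiftFst (-1) (orbPI g h (-2 - a) (2 - g + b)) :=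
          congrArg (shiftFst (-1)) hs.symm
        rw [shiftFst_comp, neg_add_cancel, shiftFst_zero, shiftFst_orb] at this
        rw [this]
        congr 1
        push_cast; ring
      · refine ⟨a, b + 1, ?_⟩
        have : shiftSnd 1 (shiftSnd (-1) _) = shiftSnd 1 (orbPI g h (-2 - a) (2 - g + b)) :=
          congrArg (shiftSnd 1) hs.symm
        rw [shiftSnd_comp, add_neg_cancel, shiftSnd_zero, shiftSnd_orb] at this
        rw [this]
        congr 1
        push_cast; ring
  · rintro ⟨a, b, rfl⟩
    unfold IsPreinj
    rw [hgamma]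
    exact (reach_fst g h a (-2) (2 - g + b)).trans (reach_snd g h b (-2) (2 - g))

lemma small_k {G c k : ℤ} (hG : 0 < G) (hk : c = G * k) (hlo : -G ≤ c) (hhi : c < G) :
    (k = 0 ∧ c = 0) ∨ (k = -1 ∧ c = -G) := by
  rcases lt_trichotomy k 0 with hx | hx | hx
  · rcases lt_trichotomy k (-1) with hy | hy | hy
    · exfalso
      have : G * k ≤ G * (-2) := mul_le_mul_of_nonneg_left (by omega) hG.le
      have h2 : G * (-2) = -(2 * G) := by ring
      omega
    · right; exact ⟨hy, by rw [hk, hy]; ring⟩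
    · omega
  · left; exact ⟨hx, by rw [hk, hx]; ring⟩
  · exfalso
    have : G * 1 ≤ G * k := mul_le_mul_of_nonneg_left (by omega) hG.le
    omega

lemma mod_succ_eq {n i : ℤ} (h0 : 0 ≤ i) (h1 : i ≤ n) :
    (i + 1) % (n + 1) = if i = n then 0 else i + 1 := by
  split
  · subst ‹i = n›; simp
  · exact Int.emod_eq_of_lt (by omega) (by omega)

end AUX

lemma orbPI_congr {g h j x j' x' : ℤ} (h1 : j = j') (h2 : x = x') :
    orbPI g h j x = orbPI g h j' x' := by rw [h1, h2]

lemma count_lemma (P1 P2 P3 P4 : Prop) [Decidable P1] [Decidable P2] [Decidable P3]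
    [Decidable P4] [Decidable (P2 ∨ P3)] [Decidable (P1 ∨ P4)]
    (hd23 : ¬(P2 ∧ P3)) (hd14 : ¬(P1 ∧ P4)) :
    ((if P2 ∨ P3 then 1 else 0) + (if P1 ∨ P4 then 1 else 0) : ℕ)
      = (if P1 then 1 else 0) + (if P2 then 1 else 0) + (if P3 then 1 else 0)
        + (if P4 then 1 else 0) := by
  by_cases p1 : P1 <;> by_cases p2 : P2 <;> by_cases p3 : P3 <;> by_cases p4 : P4 <;>
    simp_all

lemma moveFst_iff (g h n r i r' i' : ℤ) (hh : 1 ≤ h) (hgh : h ≤ g) (hn : n = g + h - 1)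
    (hr : 0 ≤ r) (hi0 : 0 ≤ i) (hin : i ≤ n) (hr' : 0 ≤ r') (hi0' : 0 ≤ i') (hin' : i' ≤ n) :
    tauGammaArc g h r' i' = shiftFst 1 (tauGammaArc g h r i) ↔
      ((r = r' + 1 ∧ 0 ≤ r' ∧ i' = i + 1 ∧ 0 ≤ i ∧ i ≤ g - 1) ∨
       (r = r' ∧ 0 ≤ r ∧ g ≤ i ∧ i ≤ n ∧ i' = (i + 1) % (n + 1))) := by
  have hg1 : (0:ℤ) < g := by omega
  have hh1 : (0:ℤ) < h := by omega
  have hG : (0:ℤ) < g + h := by omega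
  have hmod : (i + 1) % (n + 1) = if i = n then 0 else i + 1 := mod_succ_eq hi0 hin
  simp only [tauGammaArc]
  rcases le_or_gt i g with hig | hig <;> rcases le_or_gt i' g with hig' | hig'
  · -- i ≤ g, i' ≤ g
    rw [if_pos hig, if_pos hig', shiftFst_orb, orbPI_eq_iff' hg1 hh1]
    constructor
    · rintro ⟨hf, k, hk⟩
      have hc : i' - i - 1 = (g + h) * (-k) := by linear_combination -hk
      rcases small_k hG hc (by omega) (by omega) with ⟨_, hc0⟩ | ⟨_, hc1⟩
      · left
        have hii : i' = i + 1 := by omega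
        subst hii
        have h0 : (r - r' - 1) * (g + h) = 0 := by linear_combination -hf
        rcases mul_eq_zero.mp h0 with h1 | h1 <;> [skip; omega]
        exact ⟨by omega, hr', rfl, hi0, by omega⟩
      · right
        have e1 : i = n := by omega
        have e2 : i' = 0 := by omega
        have hh2 : h = 1 := by omega
        have h0 : (r - r') * (g + h) = 0 := by
          linear_combination -hf - h * e1 + h * e2 - h * hn - (g + h) * hh2
        rcases mul_eq_zero.mp h0 with h1 | h1 <;> [skip; omega]
        exact ⟨by omega, hr, by omega, by omega, by rw [hmod, if_pos e1]; exact e2⟩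
    · rintro (⟨h1r, _, h1i, _, h1g⟩ | ⟨h2r, _, h2gi, h2in, h2i'⟩)
      · subst h1r; subst h1i
        exact ⟨by ring, 0, by ring⟩
      · rw [hmod] at h2i'
        rcases eq_or_ne i n with he | he
        · rw [if_pos he] at h2i'
          have hh2 : h = 1 := by omega
          refine ⟨?_, 1, by omega⟩
          linear_combination -(g + h) * h2r - h * he + h * h2i' - h * hn - (g + h) * hh2
        · rw [if_neg he] at h2i'
          omega
  · -- i ≤ g < i'
    rw [if_pos hig, if_neg (not_le.mpr hig'), shiftFst_orb, orbPI_eq_iff' hg1 hh1]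
    constructor
    · rintro ⟨hf, k, hk⟩
      have hc : i' - i - 1 = (g + h) * (-k) := by linear_combination -hk
      rcases small_k hG hc (by omega) (by omega) with ⟨_, hc0⟩ | ⟨_, hc1⟩
      · right
        have hii : i' = i + 1 := by omega
        subst hii
        have e1 : i = g := by omega
        have h0 : (r - r') * (g + h) = 0 := by linear_combination -hf - (g + h) * e1
        rcases mul_eq_zero.mp h0 with h1 | h1 <;> [skip; omega]
        exact ⟨by omega, hr, by omega, by omega, by rw [hmod, if_neg (by omega)]⟩
      · omega
    · rintro (⟨h1r, _, h1i, _, h1g⟩ | ⟨h2r, _, h2gi, h2in, h2i'⟩)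
      · omega
      · rw [hmod] at h2i'
        rcases eq_or_ne i n with he | he
        · rw [if_pos he] at h2i'; omega
        · rw [if_neg he] at h2i'
          subst h2i'
          have e1 : i = g := by omega
          refine ⟨?_, 0, by omega⟩
          linear_combination -(g + h) * h2r - (g + h) * e1
  · -- g < i, i' ≤ g
    rw [if_neg (not_le.mpr hig), if_pos hig', shiftFst_orb, orbPI_eq_iff' hg1 hh1]
    constructor
    · rintro ⟨hf, k, hk⟩
      have hc : i' - i - 1 = (g + h) * (-k) := by linear_combination -hk
      rcases small_k hG hc (by omega) (by omega) with ⟨_, hc0⟩ | ⟨_, hc1⟩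
      · omega
      · right
        have e1 : i = n := by omega
        have e2 : i' = 0 := by omega
        have h0 : (r - r') * (g + h) = 0 := by
          linear_combination -hf + g * e1 + h * e2 + g * hn
        rcases mul_eq_zero.mp h0 with h1 | h1 <;> [skip; omega]
        exact ⟨by omega, hr, by omega, by omega, by rw [hmod, if_pos e1]; exact e2⟩
    · rintro (⟨h1r, _, h1i, _, h1g⟩ | ⟨h2r, _, h2gi, h2in, h2i'⟩)
      · omega
      · rw [hmod] at h2i'
        rcases eq_or_ne i n with he | he
        · rw [if_pos he] at h2i'
          refine ⟨?_, 1, by omega⟩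
          linear_combination -(g + h) * h2r + g * he + h * h2i' + g * hn
        · rw [if_neg he] at h2i'; omega
  · -- g < i, g < i'
    rw [if_neg (not_le.mpr hig), if_neg (not_le.mpr hig'), shiftFst_orb, orbPI_eq_iff' hg1 hh1]
    constructor
    · rintro ⟨hf, k, hk⟩
      have hc : i' - i - 1 = (g + h) * (-k) := by linear_combination -hk
      rcases small_k hG hc (by omega) (by omega) with ⟨_, hc0⟩ | ⟨_, hc1⟩
      · right
        have hii : i' = i + 1 := by omega
        subst hii
        have h0 : (r - r') * (g + h) = 0 := by linear_combination -hf
        rcases mul_eq_zero.mp h0 with h1 | h1 <;> [skip; omega]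
        exact ⟨by omega, hr, by omega, hin, by rw [hmod, if_neg (by omega)]⟩
      · omega
    · rintro (⟨h1r, _, h1i, _, h1g⟩ | ⟨h2r, _, h2gi, h2in, h2i'⟩)
      · omega
      · rw [hmod] at h2i'
        rcases eq_or_ne i n with he | he
        · rw [if_pos he] at h2i'; omega
        · rw [if_neg he] at h2i'
          subst h2i'
          refine ⟨?_, 0, by omega⟩
          linear_combination -(g + h) * h2r

lemma moveSnd_iff (g h n r i r' i' : ℤ) (hh : 1 ≤ h) (hgh : h ≤ g) (hn : n = g + h - 1)
    (hr : 0 ≤ r) (hi0 : 0 ≤ i) (hin : i ≤ n) (hr' : 0 ≤ r') (hi0' : 0 ≤ i') (hin' : i' ≤ n) :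
    tauGammaArc g h r' i' = shiftSnd (-1) (tauGammaArc g h r i) ↔
      ((r = r' ∧ 0 ≤ r ∧ i = i' + 1 ∧ 0 ≤ i' ∧ i' ≤ g - 1) ∨
       (r = r' + 1 ∧ 0 ≤ r' ∧ g ≤ i' ∧ i' ≤ n ∧ i = (i' + 1) % (n + 1))) := by
  have hg1 : (0:ℤ) < g := by omega
  have hh1 : (0:ℤ) < h := by omega
  have hG : (0:ℤ) < g + h := by omega
  have hmod' : (i' + 1) % (n + 1) = if i' = n then 0 else i' + 1 := mod_succ_eq hi0' hin'
  simp only [tauGammaArc]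
  rcases le_or_gt i g with hig | hig <;> rcases le_or_gt i' g with hig' | hig'
  · -- i ≤ g, i' ≤ g
    rw [if_pos hig, if_pos hig', shiftSnd_orb, orbPI_eq_iff' hg1 hh1]
    constructor
    · rintro ⟨hf, k, hk⟩
      have hc : i - i' - 1 = (g + h) * k := by linear_combination hk
      rcases small_k hG hc (by omega) (by omega) with ⟨_, hc0⟩ | ⟨_, hc1⟩
      · left
        have hii : i = i' + 1 := by omega
        subst hii
        have h0 : (r - r') * (g + h) = 0 := by linear_combination -hf
        rcases mul_eq_zero.mp h0 with h1 | h1 <;> [skip; omega]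
        exact ⟨by omega, hr, rfl, hi0', by omega⟩
      · right
        have e1 : i = 0 := by omega
        have e2 : i' = n := by omega
        have hh2 : h = 1 := by omega
        have h0 : (r - r' - 1) * (g + h) = 0 := by
          linear_combination -hf - h * e1 + h * e2 + h * hn + (g + h) * hh2
        rcases mul_eq_zero.mp h0 with h1 | h1 <;> [skip; omega]
        exact ⟨by omega, hr', by omega, by omega, by rw [hmod', if_pos e2]; exact e1⟩
    · rintro (⟨h1r, _, h1i, _, h1g⟩ | ⟨h2r, _, h2gi', h2in', h2i⟩)
      · subst h1r; subst h1i
        exact ⟨by ring, 0, by ring⟩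
      · rw [hmod'] at h2i
        rcases eq_or_ne i' n with he | he
        · rw [if_pos he] at h2i
          have hh2 : h = 1 := by omega
          refine ⟨?_, -1, by omega⟩
          linear_combination -(g + h) * h2r - h * h2i + h * he + h * hn + (g + h) * hh2
        · rw [if_neg he] at h2i
          omega
  · -- i ≤ g < i'
    rw [if_pos hig, if_neg (not_le.mpr hig'), shiftSnd_orb, orbPI_eq_iff' hg1 hh1]
    constructor
    · rintro ⟨hf, k, hk⟩
      have hc : i - i' - 1 = (g + h) * k := by linear_combination hk
      rcases small_k hG hc (by omega) (by omega) with ⟨_, hc0⟩ | ⟨_, hc1⟩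
      · omega
      · right
        have e1 : i = 0 := by omega
        have e2 : i' = n := by omega
        have h0 : (r - r' - 1) * (g + h) = 0 := by
          linear_combination -hf - h * e1 - g * e2 - g * hn
        rcases mul_eq_zero.mp h0 with h1 | h1 <;> [skip; omega]
        exact ⟨by omega, hr', by omega, by omega, by rw [hmod', if_pos e2]; exact e1⟩
    · rintro (⟨h1r, _, h1i, _, h1g⟩ | ⟨h2r, _, h2gi', h2in', h2i⟩)
      · omega
      · rw [hmod'] at h2i
        rcases eq_or_ne i' n with he | he
        · rw [if_pos he] at h2i
          refine ⟨?_, -1, by omega⟩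
          linear_combination -(g + h) * h2r - h * h2i - g * he - g * hn
        · rw [if_neg he] at h2i
          omega
  · -- g < i, i' ≤ g
    rw [if_neg (not_le.mpr hig), if_pos hig', shiftSnd_orb, orbPI_eq_iff' hg1 hh1]
    constructor
    · rintro ⟨hf, k, hk⟩
      have hc : i - i' - 1 = (g + h) * k := by linear_combination hk
      rcases small_k hG hc (by omega) (by omega) with ⟨_, hc0⟩ | ⟨_, hc1⟩
      · right
        have hii : i = i' + 1 := by omega
        subst hii
        have e2 : i' = g := by omega
        have h0 : (r - r' - 1) * (g + h) = 0 := by linear_combination -hf + (g + h) * e2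
        rcases mul_eq_zero.mp h0 with h1 | h1 <;> [skip; omega]
        exact ⟨by omega, hr', by omega, by omega, by rw [hmod', if_neg (by omega)]⟩
      · omega
    · rintro (⟨h1r, _, h1i, _, h1g⟩ | ⟨h2r, _, h2gi', h2in', h2i⟩)
      · omega
      · rw [hmod'] at h2i
        rcases eq_or_ne i' n with he | he
        · rw [if_pos he] at h2i; omega
        · rw [if_neg he] at h2i
          subst h2i
          have e2 : i' = g := by omega
          refine ⟨?_, 0, by omega⟩
          linear_combination -(g + h) * h2r + (g + h) * e2
  · -- g < i, g < i'
    rw [if_neg (not_le.mpr hig), if_neg (not_le.mpr hig'), shiftSnd_orb, orbPI_eq_iff' hg1 hh1]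
    constructor
    · rintro ⟨hf, k, hk⟩
      have hc : i - i' - 1 = (g + h) * k := by linear_combination hk
      rcases small_k hG hc (by omega) (by omega) with ⟨_, hc0⟩ | ⟨_, hc1⟩
      · right
        have hii : i = i' + 1 := by omega
        subst hii
        have h0 : (r - r' - 1) * (g + h) = 0 := by linear_combination -hf
        rcases mul_eq_zero.mp h0 with h1 | h1 <;> [skip; omega]
        exact ⟨by omega, hr', by omega, by omega, by rw [hmod', if_neg (by omega)]⟩
      · omega
    · rintro (⟨h1r, _, h1i, _, h1g⟩ | ⟨h2r, _, h2gi', h2in', h2i⟩)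
      · omega
      · rw [hmod'] at h2i
        rcases eq_or_ne i' n with he | he
        · rw [if_pos he] at h2i; omega
        · rw [if_neg he] at h2i
          subst h2i; subst h2r
          exact ⟨by ring, 0, by ring⟩

/-- the map `F(τ^r γ_i) = (r, i)` is a well-defined bijection from the
preinjective arcs of `P_{g,h}` onto `ℕ × {0,…,n}`, and for any two preinjective arcs
`α`, `α'` the elementary moves from `α` to `α'` are in bijection with the arrows from
`F(α)` to `F(α')` in `Q^I`. -/
theorem preinjective_quiver_iso (g h n : ℤ) (hh : 1 ≤ h) (hgh : h ≤ g)
    (hn : n = g + h - 1) :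
    Set.BijOn (fun p : ℤ × ℤ => tauGammaArc g h p.1 p.2)
      {p : ℤ × ℤ | 0 ≤ p.1 ∧ 0 ≤ p.2 ∧ p.2 ≤ n} {A | IsPreinj g h A} ∧
    (∀ p ∈ {p : ℤ × ℤ | 0 ≤ p.1 ∧ 0 ≤ p.2 ∧ p.2 ≤ n},
     ∀ q ∈ {p : ℤ × ℤ | 0 ≤ p.1 ∧ 0 ≤ p.2 ∧ p.2 ≤ n},
      piMoveCount (tauGammaArc g h p.1 p.2) (tauGammaArc g h q.1 q.2)
        = qiCount g n p q) := by
  have hg1 : (0:ℤ) < g := by omega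
  have hh1 : (0:ℤ) < h := by omega
  have hG : (0:ℤ) < g + h := by omega
  constructor
  · refine ⟨?_, ?_, ?_⟩
    · -- MapsTo
      rintro ⟨r, i⟩ ⟨hr, hi0, hin⟩
      simp only [Set.mem_setOf_eq]
      rw [preinj_iff g h hg1.le]
      by_cases hig : i ≤ g
      · refine ⟨r.toNat, (i + r).toNat, ?_⟩
        rw [tauGammaArc, if_pos hig]
        exact orbPI_congr (by omega) (by omega)
      · refine ⟨(r + n + 1 - i).toNat, r.toNat, ?_⟩
        rw [tauGammaArc, if_neg hig]
        calc orbPI g h (i - g - 2 - r) (2 + r)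
            = orbPI g h ((-2 - ((r + n + 1 - i).toNat : ℤ)) + 1 * h)
                ((2 - g + (r.toNat : ℤ)) + 1 * g) := orbPI_congr (by omega) (by omega)
          _ = orbPI g h (-2 - ((r + n + 1 - i).toNat : ℤ)) (2 - g + (r.toNat : ℤ)) :=
              orbPI_shift _ _ _ _ _
    · -- InjOn
      rintro ⟨r, i⟩ ⟨hr, hi0, hin⟩ ⟨r', i'⟩ ⟨hr', hi0', hin'⟩ heq
      simp only [tauGammaArc] at heq
      rcases le_or_gt i g with hig | hig <;> rcases le_or_gt i' g with hig' | hig' <;>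
        [rw [if_pos hig, if_pos hig'] at heq;
         rw [if_pos hig, if_neg (not_le.mpr hig')] at heq;
         rw [if_neg (not_le.mpr hig), if_pos hig'] at heq;
         rw [if_neg (not_le.mpr hig), if_neg (not_le.mpr hig')] at heq] <;>
        rw [orbPI_eq_iff' hg1 hh1] at heq <;>
        obtain ⟨hf, k, hk⟩ := heq <;>
        have hc : i' - i = (g + h) * k := by linear_combination hk
      all_goals
        rcases small_k hG hc (by omega) (by omega) with ⟨_, hc0⟩ | ⟨_, hc1⟩ <;> [skip; omega]
      all_goals have e : i' = i := by omega
      · have h0 : (r - r') * (g + h) = 0 := by linear_combination hf + h * e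
        rcases mul_eq_zero.mp h0 with h1 | h1 <;> [skip; omega]
        simp only [Prod.mk.injEq]
        constructor <;> omega
      · omega
      · omega
      · have h0 : (r - r') * (g + h) = 0 := by linear_combination hf - g * e
        rcases mul_eq_zero.mp h0 with h1 | h1 <;> [skip; omega]
        simp only [Prod.mk.injEq]
        constructor <;> omega
    · -- SurjOn
      rintro A hA
      rw [Set.mem_setOf_eq, preinj_iff g h hg1.le] at hA
      obtain ⟨a, b, rfl⟩ := hA
      set i : ℤ := ((b:ℤ) - a) % (n + 1) with hi_def
      set m : ℤ := ((b:ℤ) - a) / (n + 1) with hm_def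
      have hdiv : (b:ℤ) - a = (n + 1) * m + i := (Int.mul_ediv_add_emod _ _).symm
      have hi0 : 0 ≤ i := Int.emod_nonneg _ (by omega)
      have hin : i < n + 1 := Int.emod_lt_of_pos _ (by omega)
      have ha0 : (0:ℤ) ≤ a := Int.natCast_nonneg a
      have hb0 : (0:ℤ) ≤ b := Int.natCast_nonneg b
      have key : (a:ℤ) + h * m = (b:ℤ) - i - m * g := by linear_combination -hdiv - m * hn
      have hnegm : m < 0 → g ≤ -(m * g) := by
        intro hm0
        have h1 : 0 ≤ (-m - 1) * g := mul_nonneg (by omega) hg1.le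
        nlinarith
      by_cases hig : i ≤ g
      · refine ⟨((a:ℤ) + h * m, i), ⟨?_, hi0, by omega⟩, ?_⟩
        · show (0:ℤ) ≤ (a:ℤ) + h * m
          rcases le_or_gt 0 m with hm0 | hm0
          · have := mul_nonneg hh1.le hm0
            linarith
          · have := hnegm hm0
            linarith [key, hb0, hig]
        · show tauGammaArc g h ((a:ℤ) + h * m) i = _
          rw [tauGammaArc, if_pos hig]
          calc orbPI g h (-2 - ((a:ℤ) + h * m)) (i - g + 2 + ((a:ℤ) + h * m))
              = orbPI g h ((-2 - (a:ℤ)) + (-m) * h) ((2 - g + (b:ℤ)) + (-m) * g) :=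
                orbPI_congr (by ring) (by linear_combination -hdiv - m * hn)
            _ = orbPI g h (-2 - (a:ℤ)) (2 - g + (b:ℤ)) := orbPI_shift _ _ _ _ _
      · refine ⟨(i - g + (a:ℤ) + h * m, i), ⟨?_, hi0, by omega⟩, ?_⟩
        · show (0:ℤ) ≤ i - g + (a:ℤ) + h * m
          rcases le_or_gt 0 m with hm0 | hm0
          · have := mul_nonneg hh1.le hm0
            linarith
          · have := hnegm hm0
            linarith [key, hb0]
        · show tauGammaArc g h (i - g + (a:ℤ) + h * m) i = _
          rw [tauGammaArc, if_neg hig]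
          calc orbPI g h (i - g - 2 - (i - g + (a:ℤ) + h * m)) (2 + (i - g + (a:ℤ) + h * m))
              = orbPI g h ((-2 - (a:ℤ)) + (-m) * h) ((2 - g + (b:ℤ)) + (-m) * g) :=
                orbPI_congr (by ring) (by linear_combination -hdiv - m * hn)
            _ = orbPI g h (-2 - (a:ℤ)) (2 - g + (b:ℤ)) := orbPI_shift _ _ _ _ _
  · -- counts
    rintro ⟨r, i⟩ ⟨hr, hi0, hin⟩ ⟨r', i'⟩ ⟨hr', hi0', hin'⟩
    have HF := moveFst_iff g h n r i r' i' hh hgh hn hr hi0 hin hr' hi0' hin'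
    have HS := moveSnd_iff g h n r i r' i' hh hgh hn hr hi0 hin hr' hi0' hin'
    simp only [piMoveCount, qiCount, HF, HS]
    exact count_lemma _ _ _ _
      (by rintro ⟨⟨_, _, _, _, h2⟩, ⟨_, _, h3, _, _⟩⟩; omega)
      (by rintro ⟨⟨_, _, _, _, h1⟩, ⟨_, _, h4, _, _⟩⟩; omega)
end

section
/- Let α = π[x_∂, y_∂′] be a preprojective arc of P_{g,h} that is not equal to any projective arc β_i (0 ≤ i ≤ n). Then τα = π[(x+1)_∂, (y−1)_∂′] is preprojective, both arcs π[(x+1)_∂, y_∂′] and π[x_∂, (y−1)_∂′] are preprojective, the set of arcs admitting an elementary move to α equals {π[(x+1)_∂, y_∂′], π[x_∂, (y−1)_∂′]}, and this set equals the set of arcs reachable from τα by a single elementary move (the mesh at α). -/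
/-- The bridging arc `π[x_∂, y_∂']` of the annulus `P_{g,h}`, from the outer boundary `∂`
to the inner boundary `∂'`: the orbit of `(x, y) ∈ ℤ × ℤ` under `σ·(x,y) = (x+g, y+h)`. -/
def orbPP (g h x y : ℤ) : Set (ℤ × ℤ) := {q : ℤ × ℤ | ∃ k : ℤ, q = (x + k * g, y + k * h)}

/-- Elementary moves between bridging arcs from `∂` to `∂'`:
`π[x_∂, y_∂'] → π[(x-1)_∂, y_∂']` and `π[x_∂, y_∂'] → π[x_∂, (y+1)_∂']`. -/
def elemPP (A B : Set (ℤ × ℤ)) : Prop := B = shiftFst (-1) A ∨ B = shiftSnd 1 A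

/-- A bridging arc from `∂` to `∂'` is preprojective if it can be reached from
`β_g = π[0_∂, 0_∂']` by a finite (possibly empty) sequence of elementary moves. -/
def IsPreproj (g h : ℤ) (A : Set (ℤ × ℤ)) : Prop :=
  Relation.ReflTransGen elemPP (orbPP g h 0 0) A

/-- The projective arcs: `β_i = π[(i-g)_∂, 0_∂']` for `0 ≤ i ≤ g` and
`β_i = π[0_∂, (i-g)_∂']` for `g < i ≤ n`. -/
def betaArc (g h i : ℤ) : Set (ℤ × ℤ) :=
  if i ≤ g then orbPP g h (i - g) 0 else orbPP g h 0 (i - g)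

/-- The translation `τ`, acting on bridging arcs from `∂` to `∂'`:
`π[x_∂, y_∂'] ↦ π[(x+1)_∂, (y-1)_∂']`. -/
def tauOutIn (A : Set (ℤ × ℤ)) : Set (ℤ × ℤ) := (fun p => (p.1 + 1, p.2 - 1)) '' A

/-! In the universal cover, `π[x_∂, y_∂']` is preprojective exactly when one of its lifts
`(a, b) = (x - t g, y - t h)` lies in the quadrant `a ≤ 0 ≤ b`, because elementary moves only
decrease the first and increase the second coordinate. Moving `α` one step right or down keeps
that lift in the quadrant unless it sits on the boundary; there the lift `(a - g, b - h)`,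
resp. `(a + g, b + h)`, takes over, except for the lifts of the projective arcs `β_i`.
`τα` is one step right of `π[x_∂, (y-1)_∂']`. -/

section Arcs

variable {g h x y : ℤ}

theorem orbPP_eq_orbPP_iff {x' y' : ℤ} :
    orbPP g h x y = orbPP g h x' y' ↔ ∃ k : ℤ, x' = x + k * g ∧ y' = y + k * h := by
  constructor
  · intro hxy
    have hmem : (x', y') ∈ orbPP g h x' y' := ⟨0, by simp⟩
    rw [← hxy] at hmem
    obtain ⟨k, hk⟩ := hmem
    exact ⟨k, Prod.ext_iff.1 hk⟩
  · rintro ⟨k, rfl, rfl⟩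
    ext q
    constructor
    · rintro ⟨j, rfl⟩
      exact ⟨j - k, by ext <;> ring⟩
    · rintro ⟨j, rfl⟩
      exact ⟨j + k, by ext <;> ring⟩

theorem image_orbPP (f : ℤ × ℤ → ℤ × ℤ) (u v : ℤ) (hf : ∀ p, f p = (p.1 + u, p.2 + v)) :
    f '' orbPP g h x y = orbPP g h (x + u) (y + v) := by
  ext q
  simp only [orbPP, Set.mem_image, Set.mem_ofPred_eq, hf]
  constructor
  · rintro ⟨_, ⟨k, rfl⟩, rfl⟩
    exact ⟨k, by ext <;> ring⟩
  · rintro ⟨k, rfl⟩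
    exact ⟨_, ⟨k, rfl⟩, by ext <;> ring⟩

theorem shiftFst_orbPP (d : ℤ) : shiftFst d (orbPP g h x y) = orbPP g h (x + d) y := by
  rw [shiftFst, image_orbPP _ d 0 (fun p => by simp), add_zero]

theorem shiftSnd_orbPP (d : ℤ) : shiftSnd d (orbPP g h x y) = orbPP g h x (y + d) := by
  rw [shiftSnd, image_orbPP _ 0 d (fun p => by simp), add_zero]

theorem tauOutIn_orbPP : tauOutIn (orbPP g h x y) = orbPP g h (x + 1) (y - 1) := by
  rw [tauOutIn, image_orbPP _ 1 (-1) (fun p => by simp [sub_eq_add_neg]), sub_eq_add_neg]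

end Arcs

section Preprojective

variable {g h x y : ℤ}

theorem IsPreproj.exists_lift_of_mem {A : Set (ℤ × ℤ)} (hA : IsPreproj g h A) {p : ℤ × ℤ}
    (hp : p ∈ A) : ∃ t : ℤ, p.1 ≤ t * g ∧ t * h ≤ p.2 := by
  induction hA generalizing p with
  | refl =>
    obtain ⟨k, rfl⟩ := hp
    exact ⟨k, by simp, by simp⟩
  | tail _ hmove ih =>
    rcases hmove with rfl | rfl
    · obtain ⟨q, hq, rfl⟩ := hp
      obtain ⟨t, h1, h2⟩ := ih hq
      exact ⟨t, by linarith, h2⟩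
    · obtain ⟨q, hq, rfl⟩ := hp
      obtain ⟨t, h1, h2⟩ := ih hq
      exact ⟨t, h1, by linarith⟩

theorem IsPreproj.of_le_fst {x' : ℤ} (hA : IsPreproj g h (orbPP g h x y)) (hx : x' ≤ x) :
    IsPreproj g h (orbPP g h x' y) := by
  induction x', hx using Int.leInductionDown with
  | base => exact hA
  | pred x' _ ih => exact ih.tail (Or.inl (by rw [shiftFst_orbPP, sub_eq_add_neg]))

theorem IsPreproj.of_le_snd {y' : ℤ} (hA : IsPreproj g h (orbPP g h x y)) (hy : y ≤ y') :
    IsPreproj g h (orbPP g h x y') := by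
  induction y', hy using Int.leInduction with
  | base => exact hA
  | succ y' _ ih => exact ih.tail (Or.inr (by rw [shiftSnd_orbPP]))

theorem isPreproj_orbPP_iff :
    IsPreproj g h (orbPP g h x y) ↔ ∃ t : ℤ, x ≤ t * g ∧ t * h ≤ y := by
  refine ⟨fun hA => hA.exists_lift_of_mem (p := (x, y)) ⟨0, by simp⟩, fun ⟨t, hx, hy⟩ => ?_⟩
  have hbase : orbPP g h 0 0 = orbPP g h (t * g) (t * h) :=
    orbPP_eq_orbPP_iff.2 ⟨t, by ring, by ring⟩
  exact (IsPreproj.of_le_fst (hbase ▸ .refl) hx).of_le_snd hy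

theorem IsPreproj.add_one_fst (hg : 0 < g) (hA : IsPreproj g h (orbPP g h x y))
    (hproj : ∀ b, 0 ≤ b → b < h → orbPP g h x y ≠ orbPP g h 0 b) :
    IsPreproj g h (orbPP g h (x + 1) y) := by
  obtain ⟨t, hx, hy⟩ := isPreproj_orbPP_iff.1 hA
  rw [isPreproj_orbPP_iff]
  rcases hx.lt_or_eq with hx | rfl
  · exact ⟨t, hx, hy⟩
  · refine ⟨t + 1, by linarith, ?_⟩
    by_contra! hlt
    exact hproj (y - t * h) (by linarith) (by linarith)
      (orbPP_eq_orbPP_iff.2 ⟨-t, by ring, by ring⟩)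

theorem IsPreproj.sub_one_snd (hh : 0 < h) (hA : IsPreproj g h (orbPP g h x y))
    (hproj : ∀ a, -g < a → a ≤ 0 → orbPP g h x y ≠ orbPP g h a 0) :
    IsPreproj g h (orbPP g h x (y - 1)) := by
  obtain ⟨t, hx, hy⟩ := isPreproj_orbPP_iff.1 hA
  rw [isPreproj_orbPP_iff]
  rcases hy.lt_or_eq with hy | rfl
  · exact ⟨t, hx, by linarith⟩
  · refine ⟨t - 1, ?_, by linarith⟩
    by_contra! hlt
    exact hproj (x - t * g) (by linarith) (by linarith)
      (orbPP_eq_orbPP_iff.2 ⟨-t, by ring, by ring⟩)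

end Preprojective

section Mesh

variable {g h x y : ℤ}

theorem betaArc_add_self {a : ℤ} (ha : a ≤ 0) : betaArc g h (a + g) = orbPP g h a 0 := by
  rw [betaArc, if_pos (by linarith), add_sub_cancel_right]

theorem betaArc_self_add {b : ℤ} (hb : 0 < b) : betaArc g h (g + b) = orbPP g h 0 b := by
  rw [betaArc, if_neg (by linarith), add_sub_cancel_left]

theorem eq_shiftFst_iff {A B : Set (ℤ × ℤ)} (d : ℤ) : A = shiftFst d B ↔ shiftFst (-d) A = B := by
  constructor <;> rintro rfl <;> simp [shiftFst, Set.image_image]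

theorem eq_shiftSnd_iff {A B : Set (ℤ × ℤ)} (d : ℤ) : A = shiftSnd d B ↔ shiftSnd (-d) A = B := by
  constructor <;> rintro rfl <;> simp [shiftSnd, Set.image_image]

theorem elemPP_orbPP_left_iff {C : Set (ℤ × ℤ)} :
    elemPP (orbPP g h x y) C ↔ C = orbPP g h (x - 1) y ∨ C = orbPP g h x (y + 1) := by
  rw [elemPP, shiftFst_orbPP, shiftSnd_orbPP, sub_eq_add_neg]

theorem elemPP_orbPP_right_iff {B : Set (ℤ × ℤ)} :
    elemPP B (orbPP g h x y) ↔ B = orbPP g h (x + 1) y ∨ B = orbPP g h x (y - 1) := by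
  rw [elemPP, eq_shiftFst_iff, eq_shiftSnd_iff, shiftFst_orbPP, shiftSnd_orbPP, neg_neg,
    sub_eq_add_neg]
  exact or_congr eq_comm eq_comm

end Mesh

/-- if `α = π[x_∂, y_∂']` is a preprojective arc which is not projective,
then `τα = π[(x+1)_∂, (y-1)_∂']` is preprojective, both `π[(x+1)_∂, y_∂']` and
`π[x_∂, (y-1)_∂']` are preprojective, the set of arcs with an elementary move to `α`
equals `{π[(x+1)_∂, y_∂'], π[x_∂, (y-1)_∂']}`, and this set also equals the set of arcs
reachable from `τα` by a single elementary move (the mesh at `α`). -/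
theorem mesh_at_nonprojective (g h n : ℤ) (hh : 1 ≤ h) (hgh : h ≤ g)
    (hn : n = g + h - 1) (x y : ℤ)
    (hpre : IsPreproj g h (orbPP g h x y))
    (hnotproj : ∀ i : ℤ, 0 ≤ i → i ≤ n → orbPP g h x y ≠ betaArc g h i) :
    tauOutIn (orbPP g h x y) = orbPP g h (x + 1) (y - 1) ∧
    IsPreproj g h (orbPP g h (x + 1) (y - 1)) ∧
    IsPreproj g h (orbPP g h (x + 1) y) ∧
    IsPreproj g h (orbPP g h x (y - 1)) ∧
    {B : Set (ℤ × ℤ) | elemPP B (orbPP g h x y)}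
      = {orbPP g h (x + 1) y, orbPP g h x (y - 1)} ∧
    {B : Set (ℤ × ℤ) | elemPP B (orbPP g h x y)}
      = {C : Set (ℤ × ℤ) | elemPP (orbPP g h (x + 1) (y - 1)) C} := by
  have hg : 0 < g := by linarith
  have hsnd : ∀ a, -g ≤ a → a ≤ 0 → orbPP g h x y ≠ orbPP g h a 0 := fun a ha ha' heq =>
    hnotproj (a + g) (by linarith) (by linarith) (heq.trans (betaArc_add_self ha').symm)
  have hfst : ∀ b, 0 ≤ b → b ≤ h → orbPP g h x y ≠ orbPP g h 0 b := by
    intro b hb hbh heq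
    rcases hb.lt_or_eq with hb | rfl
    · rcases hbh.lt_or_eq with hbh | rfl
      · exact hnotproj (g + b) (by linarith) (by linarith)
          (heq.trans (betaArc_self_add hb).symm)
      · exact hsnd (-g) le_rfl (by linarith)
          (heq.trans (orbPP_eq_orbPP_iff.2 ⟨-1, by ring, by ring⟩))
    · exact hsnd 0 (by linarith) le_rfl heq
  have hdown := hpre.sub_one_snd (by linarith) fun a ha ha' => hsnd a ha.le ha'
  refine ⟨tauOutIn_orbPP, hdown.add_one_fst hg ?_,
    hpre.add_one_fst hg fun b hb hbh => hfst b hb hbh.le, hdown, ?_, ?_⟩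
  · intro b hb hbh heq
    obtain ⟨k, hx, hy⟩ := orbPP_eq_orbPP_iff.1 heq
    exact hfst (b + 1) (by linarith) hbh (orbPP_eq_orbPP_iff.2 ⟨k, hx, by linarith⟩)
  · ext B
    simp only [Set.mem_ofPred_eq, Set.mem_insert_iff, Set.mem_singleton_iff,
      elemPP_orbPP_right_iff]
  · ext B
    rw [Set.mem_ofPred_eq, Set.mem_ofPred_eq, elemPP_orbPP_right_iff, elemPP_orbPP_left_iff,
      add_sub_cancel_right, sub_add_cancel, or_comm]
end

section
/- Every preprojective arc of P_{g,h} equals π[x_∂, y_∂′] for some integers x, y with −g ≤ x ≤ 0 and y ≥ 0; consequently every preprojective arc is obtained from the projective arc β_{x+g} = π[x_∂, 0_∂′] by a sequence of y elementary moves of the form π[x_∂, t_∂′] → π[x_∂, (t+1)_∂′], i.e. each preprojective arc lies on one of the g+1 rays of rotations around a starting point on the outer boundary. -/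
lemma orb_shiftFst (g h x y d : ℤ) :
    shiftFst d (orbPP g h x y) = orbPP g h (x + d) y := by
  ext q
  constructor
  · rintro ⟨p, ⟨k, rfl⟩, rfl⟩
    exact ⟨k, by simp [Prod.ext_iff]; ring⟩
  · rintro ⟨k, rfl⟩
    exact ⟨(x + k * g, y + k * h), ⟨k, rfl⟩, by simp [Prod.ext_iff]; ring⟩

lemma orb_shiftSnd (g h x y d : ℤ) :
    shiftSnd d (orbPP g h x y) = orbPP g h x (y + d) := by
  ext q
  constructor
  · rintro ⟨p, ⟨k, rfl⟩, rfl⟩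
    exact ⟨k, by simp [Prod.ext_iff]; ring⟩
  · rintro ⟨k, rfl⟩
    exact ⟨(x + k * g, y + k * h), ⟨k, rfl⟩, by simp [Prod.ext_iff]; ring⟩

lemma orb_period (g h x y : ℤ) :
    orbPP g h x y = orbPP g h (x + g) (y + h) := by
  ext q
  constructor
  · rintro ⟨k, rfl⟩
    exact ⟨k - 1, by simp [Prod.ext_iff]; constructor <;> ring⟩
  · rintro ⟨k, rfl⟩
    exact ⟨k + 1, by simp [Prod.ext_iff]; constructor <;> ring⟩

lemma iter_shiftSnd (g h x : ℤ) (y : ℕ) :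
    (shiftSnd 1)^[y] (orbPP g h x 0) = orbPP g h x (y : ℤ) := by
  induction y with
  | zero => simp
  | succ m ih =>
      rw [Function.iterate_succ_apply', ih, orb_shiftSnd]
      push_cast
      ring_nf

/-- every preprojective arc of `P_{g,h}` equals `π[x_∂, y_∂']` for some
integers `x, y` with `-g ≤ x ≤ 0` and `y ≥ 0`; consequently it is obtained from the
projective arc `β_{x+g} = π[x_∂, 0_∂']` by `y` elementary moves
`π[x_∂, t_∂'] → π[x_∂, (t+1)_∂']`, i.e. each preprojective arc lies on one of the `g+1`
rays of rotations around a starting point on the outer boundary. -/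
theorem preprojective_on_rays (g h n : ℤ) (hh : 1 ≤ h) (hgh : h ≤ g)
    (hn : n = g + h - 1) :
    ∀ A : Set (ℤ × ℤ), IsPreproj g h A →
      ∃ (x : ℤ) (y : ℕ), -g ≤ x ∧ x ≤ 0 ∧ A = orbPP g h x (y : ℤ) ∧
        betaArc g h (x + g) = orbPP g h x 0 ∧
        (shiftSnd 1)^[y] (orbPP g h x 0) = A := by
  intro A hA
  induction hA with
  | refl =>
      exact ⟨0, 0, by linarith, le_refl 0, by norm_num, by simp [betaArc], by simp⟩
  | tail hBC hstep ih =>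
      obtain ⟨x, y, hx1, hx2, rfl, hbeta, hiter⟩ := ih
      rcases hstep with rfl | rfl
      · rw [orb_shiftFst]
        by_cases hc : -g ≤ x + -1
        · refine ⟨x + -1, y, hc, by linarith, rfl, ?_, ?_⟩
          · have : x + -1 + g ≤ g := by linarith
            simp [betaArc, this]
          · exact iter_shiftSnd g h (x + -1) y
        · have hx : x = -g := by omega
          have hkey : orbPP g h (x + -1) (y : ℤ) = orbPP g h (-1) ((y : ℤ) + h) := by
            have he : x + -1 + g = -1 := by omega
            rw [orb_period g h (x + -1) (y : ℤ), he]
          refine ⟨-1, y + h.toNat, by linarith, by norm_num, ?_, ?_, ?_⟩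
          · rw [hkey]
            congr 1
            push_cast [Int.toNat_of_nonneg (by linarith : (0:ℤ) ≤ h)]
            ring
          · have : (-1 : ℤ) + g ≤ g := by linarith
            simp [betaArc, this]
          · rw [iter_shiftSnd, hkey]
            congr 1
            push_cast [Int.toNat_of_nonneg (by linarith : (0:ℤ) ≤ h)]
            ring
      · rw [orb_shiftSnd]
        refine ⟨x, y + 1, hx1, hx2, by push_cast; ring_nf, hbeta, ?_⟩
        rw [iter_shiftSnd]
        push_cast
        ring_nf
end
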